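/- Let Q be a symmetric n×n real matrix, d ∈ ℝⁿ, A ∈ ℝ^{m×n}, b ∈ ℝᵐ, and let M, N be symmetric positive semidefinite n×n matrices with Q = M − N. Define Ψ(x, x̃) := ½xᵀMx + ½x̃ᵀMx̃ + dᵀx + dᵀx̃ − xᵀNx̃. Then a point x̄ ∈ F is a KKT point of the QP if and only if x̄ minimizes the function x ↦ Ψ(x, x̄) over F, i.e. Ψ(x̄, x̄) ≤ Ψ(x, x̄) for all x ∈ F. -/

import Mathlib

open Matrix

/-- The bi-convex function `Ψ(x, x̃) = ½xᵀMx + ½x̃ᵀMx̃ + dᵀx + dᵀx̃ − xᵀNx̃`. -/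
noncomputable def Psi {n : ℕ} (M N : Matrix (Fin n) (Fin n) ℝ) (d : Fin n → ℝ)
    (x xt : Fin n → ℝ) : ℝ :=
  (1 / 2 : ℝ) * (x ⬝ᵥ (M *ᵥ x)) + (1 / 2 : ℝ) * (xt ⬝ᵥ (M *ᵥ xt)) +
    d ⬝ᵥ x + d ⬝ᵥ xt - x ⬝ᵥ (N *ᵥ xt)

/-!
Expanding `Ψ` gives `Ψ(x, x̄) - Ψ(x̄, x̄) = ½ (x - x̄)ᵀ M (x - x̄) + (x - x̄)ᵀ (Q x̄ + d)`.
As `M ⪰ 0` and `F` is convex, `x̄` minimizes this over `F` iff the linear part is nonnegative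
on `F`: along the segment from `x̄` to `x` the quadratic part is of second order. That
variational inequality is equivalent to the KKT conditions by Farkas' lemma, applied to the
homogenized cone `{(v, t) | t ≥ 0, A v ≤ t (b - A x̄)}`. Farkas' lemma itself is proved by
induction on the number of generators, eliminating the last one by a projection as in
Fourier–Motzkin elimination.
-/

open Filter Topology

section LinearInequalities

theorem exists_nonneg_sum_insert_smul_eq {R E κ : Type*} [Semiring R] [PartialOrder R]
    [AddCommMonoid E] [Module R E] [DecidableEq κ] (a : κ → E) {s : Finset κ} {k : κ}
    (hk : k ∉ s) {lam : κ → R} (hlam : 0 ≤ lam) {c : R} (hc : 0 ≤ c) :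
    ∃ lam' : κ → R, 0 ≤ lam' ∧ c • a k + ∑ i ∈ s, lam i • a i = ∑ i ∈ insert k s, lam' i • a i := by
  refine ⟨Function.update lam k c, fun i => ?_, ?_⟩
  · rcases eq_or_ne i k with rfl | hi
    · simpa
    · simpa [hi] using hlam i
  rw [Finset.sum_insert hk, Function.update_self]
  congr 1
  exact Finset.sum_congr rfl fun i hi => by rw [Function.update_of_ne (ne_of_mem_of_not_mem hi hk)]

/-- `v ↦ (a k ⬝ᵥ w) • v - (a k ⬝ᵥ v) • w` projects along `w` onto the hyperplane `a k ⬝ᵥ v = 0`,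
which eliminates the generator `a k`. -/
theorem smul_sub_smul_dotProduct_nonpos {R ι κ : Type*} [CommRing R] [Preorder R] [Fintype ι]
    [DecidableEq κ] {a : κ → ι → R} {s : Finset κ} {k : κ}
    {g : ι → R} (h : ∀ v, (∀ i ∈ insert k s, a i ⬝ᵥ v ≤ 0) → g ⬝ᵥ v ≤ 0) (w : ι → R)
    {v : ι → R} (hv : ∀ i ∈ s, ((a k ⬝ᵥ w) • a i - (a i ⬝ᵥ w) • a k) ⬝ᵥ v ≤ 0) :
    ((a k ⬝ᵥ w) • g - (g ⬝ᵥ w) • a k) ⬝ᵥ v ≤ 0 := by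
  have hshift : ∀ x : ι → R,
      x ⬝ᵥ ((a k ⬝ᵥ w) • v - (a k ⬝ᵥ v) • w) = ((a k ⬝ᵥ w) • x - (x ⬝ᵥ w) • a k) ⬝ᵥ v := by
    intro x
    simp only [dotProduct_sub, sub_dotProduct, dotProduct_smul, smul_dotProduct, smul_eq_mul]
    ring
  rw [← hshift]
  refine h _ fun i hi => ?_
  rw [hshift]
  rcases Finset.mem_insert.mp hi with rfl | hi
  · simp
  · exact hv i hi

variable {𝕜 ι κ : Type*} [Field 𝕜] [LinearOrder 𝕜] [IsStrictOrderedRing 𝕜] [Fintype ι]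

theorem exists_nonneg_sum_smul_eq_of_dotProduct_nonpos (a : κ → ι → 𝕜) (s : Finset κ)
    {g : ι → 𝕜} (h : ∀ v, (∀ i ∈ s, a i ⬝ᵥ v ≤ 0) → g ⬝ᵥ v ≤ 0) :
    ∃ lam : κ → 𝕜, 0 ≤ lam ∧ g = ∑ i ∈ s, lam i • a i := by
  classical
  induction s using Finset.induction_on generalizing a g with
  | empty =>
    have hg : g = 0 := dotProduct_self_eq_zero.mp <|
      (h g (by simp)).antisymm (Finset.sum_nonneg fun i _ => mul_self_nonneg (g i))
    exact ⟨0, le_rfl, by simp [hg]⟩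
  | insert k s hk ih =>
    suffices ∃ lam : κ → 𝕜, 0 ≤ lam ∧ ∃ c : 𝕜, 0 ≤ c ∧ g = c • a k + ∑ i ∈ s, lam i • a i by
      obtain ⟨lam, hlam, c, hc, rfl⟩ := this
      exact exists_nonneg_sum_insert_smul_eq a hk hlam hc
    by_cases hs : ∀ v, (∀ i ∈ s, a i ⬝ᵥ v ≤ 0) → g ⬝ᵥ v ≤ 0
    · obtain ⟨lam, hlam, hg⟩ := ih a hs
      exact ⟨lam, hlam, 0, le_rfl, by simp [hg]⟩
    push Not at hs
    obtain ⟨w, hw, hgw⟩ := hs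
    set c := a k ⬝ᵥ w
    have hc : 0 < c := by
      by_contra! hc
      exact (h w (Finset.forall_mem_insert _ _ _ |>.mpr ⟨hc, hw⟩)).not_gt hgw
    obtain ⟨μ, hμ, hμg⟩ :=
      ih (fun i => c • a i - (a i ⬝ᵥ w) • a k) fun _ => smul_sub_smul_dotProduct_nonpos h w
    refine ⟨μ, hμ, (g ⬝ᵥ w - ∑ i ∈ s, μ i * (a i ⬝ᵥ w)) / c, ?_, ?_⟩
    · have hsum : ∑ i ∈ s, μ i * (a i ⬝ᵥ w) ≤ 0 :=
        Finset.sum_nonpos fun i hi => mul_nonpos_of_nonneg_of_nonpos (hμ i) (hw i hi)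
      exact div_nonneg (by linarith) hc.le
    · have hexpand : ∑ i ∈ s, μ i • (c • a i - (a i ⬝ᵥ w) • a k) =
          c • ∑ i ∈ s, μ i • a i - (∑ i ∈ s, μ i * (a i ⬝ᵥ w)) • a k := by
        simp only [smul_sub, Finset.sum_sub_distrib, Finset.smul_sum, Finset.sum_smul, smul_smul,
          mul_comm c]
      apply smul_right_injective _ hc.ne'
      simp only [smul_add, smul_smul, mul_div_cancel₀ _ hc.ne']
      rw [hexpand] at hμg
      linear_combination (norm := module) hμg

variable {A : Matrix κ ι 𝕜} {b : κ → 𝕜} {g xbar : ι → 𝕜}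

/-- `(v, t)` with `t > 0` is a multiple of `x - xbar` with `A x ≤ b`; for `t = 0`, `v` is a
recession direction of the polyhedron. -/
theorem dotProduct_nonneg_of_mulVec_le_smul (hxbar : A *ᵥ xbar ≤ b)
    (hmin : ∀ x, A *ᵥ x ≤ b → 0 ≤ (x - xbar) ⬝ᵥ g) {v : ι → 𝕜} {t : 𝕜} (ht : 0 ≤ t)
    (hv : A *ᵥ v ≤ t • (b - A *ᵥ xbar)) : 0 ≤ v ⬝ᵥ g := by
  rcases ht.eq_or_lt with rfl | ht
  · have hAv : A *ᵥ v ≤ b - A *ᵥ xbar :=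
      (zero_smul 𝕜 (b - A *ᵥ xbar) ▸ hv).trans (sub_nonneg.mpr hxbar)
    simpa using hmin (xbar + v) (by rw [mulVec_add]; exact le_sub_iff_add_le'.mp hAv)
  · have hAv : t⁻¹ • A *ᵥ v ≤ b - A *ᵥ xbar := by
      simpa [smul_smul, ht.ne'] using smul_le_smul_of_nonneg_left hv (inv_nonneg.2 ht.le)
    simpa [smul_dotProduct, ht] using
      hmin (xbar + t⁻¹ • v) (by rw [mulVec_add, mulVec_smul]; exact le_sub_iff_add_le'.mp hAv)

variable [Fintype κ]

omit [LinearOrder 𝕜] [IsStrictOrderedRing 𝕜] in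
theorem Option.elim'_dotProduct (t : 𝕜) (v : ι → 𝕜) (w : Option ι → 𝕜) :
    Option.elim' t v ⬝ᵥ w = t * w none + v ⬝ᵥ fun i => w (some i) := by
  simp [dotProduct, Fintype.sum_option]

theorem exists_kkt_multiplier_of_forall_sub_dotProduct_nonneg (hxbar : A *ᵥ xbar ≤ b)
    (hmin : ∀ x, A *ᵥ x ≤ b → 0 ≤ (x - xbar) ⬝ᵥ g) :
    ∃ lam : κ → 𝕜, 0 ≤ lam ∧ g = -(Aᵀ *ᵥ lam) ∧ (A *ᵥ xbar - b) ⬝ᵥ lam = 0 := by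
  set s := b - A *ᵥ xbar
  -- Farkas in the homogenized space `𝕜 × (ι → 𝕜)`, encoded as `Option ι → 𝕜`, for the
  -- constraints `-t ≤ 0` and `A v - t • s ≤ 0`.
  obtain ⟨lam, hlam, hsum⟩ := exists_nonneg_sum_smul_eq_of_dotProduct_nonpos
    (Option.elim' (Option.elim' (-1) 0) fun i => Option.elim' (-s i) (A i)) Finset.univ
    (g := Option.elim' 0 (-g)) fun w hw => by
      have ht : 0 ≤ w none := by simpa [Option.elim'_dotProduct] using hw none
      have hv : A *ᵥ (fun i => w (some i)) ≤ w none • s := fun i => by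
        have := hw (some i) (Finset.mem_univ _)
        simp only [Option.elim'_some, Option.elim'_dotProduct, neg_mul, neg_add_le_iff_le_add,
          add_zero] at this
        simpa only [mulVec, Pi.smul_apply, smul_eq_mul, mul_comm (w none)] using this
      simpa [Option.elim'_dotProduct, dotProduct_comm g] using
        dotProduct_nonneg_of_mulVec_le_smul hxbar hmin ht hv
  refine ⟨fun i => lam (some i), fun i => hlam (some i), ?_, ?_⟩
  · funext j
    have := congrFun hsum (some j)
    simp only [Option.elim'_some, Pi.neg_apply, Finset.sum_apply, Pi.smul_apply, smul_eq_mul,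
      Fintype.sum_option, Option.elim'_none, Pi.zero_apply, mul_zero, zero_add] at this
    simp only [Pi.neg_apply, mulVec, dotProduct, transpose_apply, mul_comm (A _ j)]
    linarith
  · have hnone := congrFun hsum none
    simp only [Option.elim'_none, Finset.sum_apply, Pi.smul_apply, smul_eq_mul, Fintype.sum_option,
      mul_neg, mul_one, Option.elim'_some, Finset.sum_neg_distrib] at hnone
    have hslack : 0 ≤ s ⬝ᵥ fun i => lam (some i) :=
      dotProduct_nonneg_of_nonneg (sub_nonneg.mpr hxbar) fun i => hlam _
    rw [show A *ᵥ xbar - b = -s from (neg_sub _ _).symm, neg_dotProduct, neg_eq_zero]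
    refine le_antisymm ?_ hslack
    simp only [dotProduct, mul_comm (s _)]
    have h0 : (0 : 𝕜) ≤ lam none := hlam none
    linarith

theorem sub_dotProduct_nonneg_of_kkt {lam : κ → 𝕜} (hlam : 0 ≤ lam) (hg : g = -(Aᵀ *ᵥ lam))
    (hslack : (A *ᵥ xbar - b) ⬝ᵥ lam = 0) {x : ι → 𝕜} (hx : A *ᵥ x ≤ b) :
    0 ≤ (x - xbar) ⬝ᵥ g :=
  calc 0 ≤ (b - A *ᵥ x) ⬝ᵥ lam + (A *ᵥ xbar - b) ⬝ᵥ lam := by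
        rw [hslack, add_zero]; exact dotProduct_nonneg_of_nonneg (sub_nonneg.mpr hx) hlam
    _ = (x - xbar) ⬝ᵥ g := by
        rw [hg, dotProduct_neg, dotProduct_mulVec, vecMul_transpose, mulVec_sub]
        simp only [sub_dotProduct]
        ring

theorem forall_sub_dotProduct_nonneg_iff_exists_kkt (hxbar : A *ᵥ xbar ≤ b) :
    (∀ x, A *ᵥ x ≤ b → 0 ≤ (x - xbar) ⬝ᵥ g) ↔
      ∃ lam : κ → 𝕜, 0 ≤ lam ∧ g = -(Aᵀ *ᵥ lam) ∧ (A *ᵥ xbar - b) ⬝ᵥ lam = 0 :=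
  ⟨exists_kkt_multiplier_of_forall_sub_dotProduct_nonneg hxbar,
    fun ⟨_, hlam, hg, hslack⟩ _ => sub_dotProduct_nonneg_of_kkt hlam hg hslack⟩

end LinearInequalities

theorem nonneg_of_forall_mul_add_nonneg {q s : ℝ}
    (h : ∀ t ∈ Set.Ioc (0 : ℝ) 1, 0 ≤ t * q + s) : 0 ≤ s := by
  have hlim : Tendsto (fun t => t * q + s) (𝓝[>] 0) (𝓝 s) := by
    simpa using ((show Continuous fun t : ℝ => t * q + s by fun_prop).tendsto 0).mono_left
      nhdsWithin_le_nhds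
  exact ge_of_tendsto hlim (eventually_of_mem (Ioc_mem_nhdsGT one_pos) h)

section Quadratic

variable {ι : Type*} [Fintype ι] {M : Matrix ι ι ℝ} {S : Set (ι → ℝ)} {xbar g : ι → ℝ}

theorem forall_half_quadratic_add_nonneg_iff (hM : M.PosSemidef) (hS : StarConvex ℝ xbar S) :
    (∀ x ∈ S, 0 ≤ 1 / 2 * ((x - xbar) ⬝ᵥ M *ᵥ (x - xbar)) + (x - xbar) ⬝ᵥ g) ↔
      ∀ x ∈ S, 0 ≤ (x - xbar) ⬝ᵥ g := by
  constructor
  · intro hmin x hx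
    set u := x - xbar
    refine nonneg_of_forall_mul_add_nonneg (q := 1 / 2 * (u ⬝ᵥ M *ᵥ u)) fun t ⟨ht₀, ht₁⟩ => ?_
    have := hmin _ (hS.add_smul_sub_mem hx ht₀.le ht₁)
    simp only [add_sub_cancel_left, mulVec_smul, dotProduct_smul, smul_dotProduct,
      smul_eq_mul] at this
    exact nonneg_of_mul_nonneg_right (by linarith) ht₀
  · intro hmin x hx
    have := hM.dotProduct_mulVec_nonneg (x - xbar)
    simp only [star_trivial] at this
    linarith [hmin x hx]

end Quadratic

theorem Psi_sub_Psi_self {n : ℕ} (M N : Matrix (Fin n) (Fin n) ℝ) (hM : M.IsSymm)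
    (d x xbar : Fin n → ℝ) :
    Psi M N d x xbar - Psi M N d xbar xbar =
      1 / 2 * ((x - xbar) ⬝ᵥ M *ᵥ (x - xbar)) + (x - xbar) ⬝ᵥ ((M - N) *ᵥ xbar + d) := by
  have hsym : x ⬝ᵥ M *ᵥ xbar = xbar ⬝ᵥ M *ᵥ x := by
    rw [dotProduct_mulVec, ← hM, vecMul_transpose, hM, dotProduct_comm]
  simp only [Psi, mulVec_sub, sub_mulVec, dotProduct_sub, sub_dotProduct, dotProduct_add,
    dotProduct_comm _ d, hsym]
  ring

theorem kkt_iff_psi_min_general {n m : ℕ} (Q M N : Matrix (Fin n) (Fin n) ℝ)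
    (hM : M.PosSemidef) (hQMN : Q = M - N)
    (d : Fin n → ℝ) (A : Matrix (Fin m) (Fin n) ℝ) (b : Fin m → ℝ)
    (xbar : Fin n → ℝ) (hfeas : A *ᵥ xbar ≤ b) :
    (∃ lam : Fin m → ℝ, 0 ≤ lam ∧ Q *ᵥ xbar + d = -(Aᵀ *ᵥ lam) ∧
        (A *ᵥ xbar - b) ⬝ᵥ lam = 0) ↔
      (∀ x : Fin n → ℝ, A *ᵥ x ≤ b → Psi M N d xbar xbar ≤ Psi M N d x xbar) := by
  have hF : StarConvex ℝ xbar {x | A *ᵥ x ≤ b} :=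
    ((convex_Iic b).linear_preimage (mulVecLin A)).starConvex hfeas
  rw [← forall_sub_dotProduct_nonneg_iff_exists_kkt hfeas]
  refine (forall_half_quadratic_add_nonneg_iff hM hF).symm.trans (forall₂_congr fun x _ => ?_)
  rw [hQMN, ← Psi_sub_Psi_self M N (isHermitian_iff_isSymm.mp hM.1), sub_nonneg]

/-- Lemma `l:biKKT`. Let `Q = M − N` with `M, N ⪰ 0`. A feasible
point `x̄` is a KKT point of the QP if and only if `x̄` minimizes `x ↦ Ψ(x, x̄)` over
the feasible region `F = {x : Ax ≤ b}`. -/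
theorem kkt_iff_psi_min {n m : ℕ} (Q M N : Matrix (Fin n) (Fin n) ℝ)
    (hQ : Q.IsSymm) (hM : M.PosSemidef) (hN : N.PosSemidef) (hQMN : Q = M - N)
    (d : Fin n → ℝ) (A : Matrix (Fin m) (Fin n) ℝ) (b : Fin m → ℝ)
    (xbar : Fin n → ℝ) (hfeas : A *ᵥ xbar ≤ b) :
    (∃ lam : Fin m → ℝ, 0 ≤ lam ∧ Q *ᵥ xbar + d = -(Aᵀ *ᵥ lam) ∧
        (A *ᵥ xbar - b) ⬝ᵥ lam = 0) ↔
      (∀ x : Fin n → ℝ, A *ᵥ x ≤ b → Psi M N d xbar xbar ≤ Psi M N d x xbar) :=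
  kkt_iff_psi_min_general Q M N hM hQMN d A b xbar hfeas
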